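/- Let -1 < q ≤ 1, ρ ∈ ℝ with |ρ| < 1, and let (ξ_m)_{m≥0} be a real sequence such that for every n ≥ 0 and every ρ' with |ρ'| ≤ |ρ| the series σ_n(ρ'|q) = Σ_{j≥0} (ρ'^j/[j]_q!) ξ_{n+j} converges absolutely. Then for all integers m, n ≥ 0: σ_n(ρ q^m|q) = Σ_{k=0}^{m} (-1)^k [m choose k]_q q^{k(k-1)/2} (1-q)^k ρ^k σ_{n+k}(ρ|q). -/

import Mathlib

open Finset MeasureTheory

noncomputable section

/-- [n]_q = 1 + q + ... + q^{n-1} -/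
def qNat (q : ℝ) (n : ℕ) : ℝ := ∑ j ∈ Finset.range n, q ^ j

/-- [n]_q! -/
def qFact (q : ℝ) : ℕ → ℝ
  | 0 => 1
  | n + 1 => qFact q n * qNat q (n + 1)

/-- q-binomial coefficient -/
def qBinom (q : ℝ) (n k : ℕ) : ℝ :=
  if k ≤ n then qFact q n / (qFact q (n - k) * qFact q k) else 0

/-- q-Pochhammer symbol (a;q)_n -/
def qPoch (a q : ℝ) (n : ℕ) : ℝ := ∏ j ∈ Finset.range n, (1 - a * q ^ j)

/-- q-Pochhammer symbol (a;q)_∞ -/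
def qPochInf (a q : ℝ) : ℝ := ∏' j : ℕ, (1 - a * q ^ j)

/-- continuous q-Hermite polynomials H_n(x|q) -/
def qHermite (q : ℝ) : ℕ → ℝ → ℝ
  | 0, _ => 1
  | 1, x => x
  | n + 2, x => x * qHermite q (n + 1) x - qNat q (n + 1) * qHermite q n x

/-- big q-Hermite polynomials H_n(x|a,q) -/
def bigqHermite (q a : ℝ) : ℕ → ℝ → ℝ
  | 0, _ => 1
  | 1, x => x - a
  | n + 2, x => (x - a * q ^ (n + 1)) * bigqHermite q a (n + 1) x -
      qNat q (n + 1) * bigqHermite q a n x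

/-- rescaled Al-Salam--Chihara polynomials P_n(x|y,ρ,q) -/
def ascP (q y ρ : ℝ) : ℕ → ℝ → ℝ
  | 0, _ => 1
  | 1, x => x - ρ * y
  | n + 2, x => (x - ρ * y * q ^ (n + 1)) * ascP q y ρ (n + 1) x -
      qNat q (n + 1) * (1 - ρ ^ 2 * q ^ n) * ascP q y ρ n x

/-- generating function φ_H(x|t,q) of the q-Hermite polynomials -/
def phiH (q t x : ℝ) : ℝ := ∑' n : ℕ, t ^ n / qFact q n * qHermite q n x

/-- γ_{i,j}(x,y|ρ,q) -/
def gammaPM (q ρ : ℝ) (i j : ℕ) (x y : ℝ) : ℝ :=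
  ∑' n : ℕ, ρ ^ n / qFact q n * qHermite q (n + i) x * qHermite q (n + j) y

/-- the polynomials Q_{i,j}(x,y|ρ,q) -/
def Qpoly (q ρ : ℝ) (i j : ℕ) (x y : ℝ) : ℝ :=
  ∑ s ∈ Finset.range (j + 1),
    (-1 : ℝ) ^ s * q ^ (s * (s - 1) / 2) * qBinom q j s * ρ ^ s * qHermite q (j - s) y *
      ascP q y ρ (i + s) x / qPoch (ρ ^ 2) q (i + s)

/-- the interval S(q) = [-2/√(1-q), 2/√(1-q)] -/
def Sq (q : ℝ) : Set ℝ := Set.Icc (-(2 / Real.sqrt (1 - q))) (2 / Real.sqrt (1 - q))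

/-- ω(x,y|ρ) -/
def omegaPM (x y ρ : ℝ) : ℝ :=
  (1 - ρ ^ 2) ^ 2 - 4 * ρ * (1 + ρ ^ 2) * x * y + 4 * ρ ^ 2 * (x ^ 2 + y ^ 2)

/-- l(x|a) -/
def lPM (x a : ℝ) : ℝ := (1 + a) ^ 2 - 4 * a * x ^ 2

/-- the q-Normal density f_N(x|q) -/
def fN (q x : ℝ) : ℝ :=
  Real.sqrt ((1 - q) * (4 - (1 - q) * x ^ 2)) * qPochInf q q / (2 * Real.pi) *
    ∏' j : ℕ, lPM (x * Real.sqrt (1 - q) / 2) (q ^ (j + 1))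

/-- the (q,ρ)-Conditional Normal density f_CN(x|y,ρ,q) -/
def fCN (q ρ x y : ℝ) : ℝ :=
  fN q x * qPochInf (ρ ^ 2) q /
    ∏' j : ℕ, omegaPM (x * Real.sqrt (1 - q) / 2) (y * Real.sqrt (1 - q) / 2) (ρ * q ^ j)

/-- the (ρ,q)-bivariate Normal density f_{2D}(x,y|ρ,q) -/
def f2D (q ρ x y : ℝ) : ℝ := fCN q ρ x y * fN q y

/-! Expanding each `σ_{n+k}(ρ|q)` and collecting the coefficient of `ρ^t ξ_{n+t} / [t]_q!`,
the claim reduces to the finite identity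
`∑_k (-1)^k [m choose k]_q q^{k(k-1)/2} (1-q)^k [t]_q [t-1]_q ⋯ [t-k+1]_q = q^{mt}`,
which follows by induction on `m` from the q-Pascal rule, since
`(1-q)^{k+1} [t]_q ⋯ [t-k]_q = (1-q)^k [t]_q ⋯ [t-k+1]_q (1 - q^{t-k})`. -/

variable {q : ℝ}

lemma one_sub_mul_qNat (n : ℕ) : (1 - q) * qNat q n = 1 - q ^ n := by
  rw [qNat, mul_comm, geom_sum_mul_neg]

lemma qNat_add (a b : ℕ) : qNat q (a + b) = qNat q a + q ^ a * qNat q b := by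
  simp only [qNat, Finset.sum_range_add, Finset.mul_sum, pow_add]

lemma qNat_succ_ne_zero (hq : q ≠ -1) (n : ℕ) : qNat q (n + 1) ≠ 0 := by
  intro h
  have hpow : q ^ (n + 1) = 1 := by
    linear_combination one_sub_mul_qNat (q := q) (n + 1) - (1 - q) * h
  rcases pow_eq_one_iff_cases.1 hpow with h0 | rfl | ⟨rfl, -⟩
  · omega
  · exact n.cast_add_one_ne_zero (by simpa [qNat] using h)
  · exact hq rfl

lemma qFact_succ (n : ℕ) : qFact q (n + 1) = qFact q n * qNat q (n + 1) := rfl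

lemma qFact_ne_zero (hq : q ≠ -1) : ∀ n, qFact q n ≠ 0
  | 0 => one_ne_zero
  | n + 1 => mul_ne_zero (qFact_ne_zero hq n) (qNat_succ_ne_zero hq n)

lemma qBinom_zero_right (hq : q ≠ -1) (n : ℕ) : qBinom q n 0 = 1 := by
  simp [qBinom, qFact, qFact_ne_zero hq]

lemma qBinom_self (hq : q ≠ -1) (n : ℕ) : qBinom q n n = 1 := by
  simp [qBinom, qFact, qFact_ne_zero hq]

lemma qBinom_of_lt {n k : ℕ} (h : n < k) : qBinom q n k = 0 := by
  simp [qBinom, h.not_ge]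

lemma qBinom_succ_succ (hq : q ≠ -1) (m j : ℕ) :
    qBinom q (m + 1) (j + 1) = q ^ (j + 1) * qBinom q m (j + 1) + qBinom q m j := by
  rcases lt_trichotomy j m with hjm | rfl | hmj
  · obtain ⟨r, rfl⟩ : ∃ r, m = j + 1 + r := ⟨m - (j + 1), by omega⟩
    have hN : qNat q (j + 1 + r + 1) = qNat q (j + 1) + q ^ (j + 1) * qNat q (r + 1) :=
      qNat_add (j + 1) (r + 1)
    simp only [qBinom, if_pos (show j + 1 ≤ j + 1 + r + 1 by omega),
      if_pos (show j + 1 ≤ j + 1 + r by omega), if_pos (show j ≤ j + 1 + r by omega),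
      show j + 1 + r + 1 - (j + 1) = r + 1 by omega, show j + 1 + r - (j + 1) = r by omega,
      show j + 1 + r - j = r + 1 by omega, qFact_succ, hN]
    have := qFact_ne_zero hq j
    have := qFact_ne_zero hq r
    have := qNat_succ_ne_zero hq j
    have := qNat_succ_ne_zero hq r
    field_simp
    ring
  · rw [qBinom_self hq, qBinom_self hq, qBinom_of_lt (Nat.lt_succ_self j)]
    ring
  · rw [qBinom_of_lt (by omega), qBinom_of_lt (by omega), qBinom_of_lt hmj]
    ring

/-- `[t]_q [t-1]_q ⋯ [t-k+1]_q`, the q-analogue of `Nat.descFactorial`; it vanishes for `t < k`,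
where the factor `[0]_q = 0` occurs. -/
def qDescFactorial (q : ℝ) (t k : ℕ) : ℝ := ∏ i ∈ Finset.range k, qNat q (t - i)

lemma qDescFactorial_succ (t k : ℕ) :
    qDescFactorial q t (k + 1) = qDescFactorial q t k * qNat q (t - k) :=
  Finset.prod_range_succ _ k

lemma qDescFactorial_of_lt {t k : ℕ} (h : t < k) : qDescFactorial q t k = 0 :=
  Finset.prod_eq_zero (Finset.mem_range.2 h) (by simp [qNat])

lemma qDescFactorial_mul_qFact_sub {t k : ℕ} (h : k ≤ t) :
    qDescFactorial q t k * qFact q (t - k) = qFact q t := by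
  induction k with
  | zero => simp [qDescFactorial]
  | succ k ih =>
    obtain ⟨r, hr⟩ : ∃ r, t - k = r + 1 := ⟨t - k - 1, by omega⟩
    rw [← ih (by omega), qDescFactorial_succ, hr, qFact_succ, show t - (k + 1) = r by omega]
    ring

lemma one_sub_pow_mul_qDescFactorial_succ (t k : ℕ) :
    (1 - q) ^ (k + 1) * qDescFactorial q t (k + 1) =
      (1 - q) ^ k * qDescFactorial q t k * (1 - q ^ (t - k)) := by
  rw [qDescFactorial_succ, ← one_sub_mul_qNat]
  ring

lemma pow_mul_pow_sub_mul_qDescFactorial (t k : ℕ) :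
    q ^ k * q ^ (t - k) * qDescFactorial q t k = q ^ t * qDescFactorial q t k := by
  rcases le_or_gt k t with h | h
  · rw [← pow_add, Nat.add_sub_cancel' h]
  · simp [qDescFactorial_of_lt h]

lemma sum_neg_one_pow_mul_qBinom_succ (hq : q ≠ -1) (m : ℕ) (f : ℕ → ℝ) :
    ∑ k ∈ Finset.range (m + 2), (-1) ^ k * qBinom q (m + 1) k * f k =
      ∑ k ∈ Finset.range (m + 1), (-1) ^ k * qBinom q m k * (q ^ k * f k - f (k + 1)) := by
  have hshift : ∑ k ∈ Finset.range (m + 1), (-1) ^ k * qBinom q m k * (q ^ k * f k) =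
      ∑ k ∈ Finset.range (m + 2), (-1) ^ k * qBinom q m k * (q ^ k * f k) := by
    rw [Finset.sum_range_succ _ (m + 1), qBinom_of_lt (Nat.lt_succ_self m)]
    ring
  simp only [mul_sub, Finset.sum_sub_distrib, hshift]
  rw [Finset.sum_range_succ', Finset.sum_range_succ' _ (m + 1)]
  simp only [qBinom_succ_succ hq, qBinom_zero_right hq, pow_succ, mul_add, add_mul,
    Finset.sum_add_distrib, mul_neg, mul_one, neg_mul, Finset.sum_neg_distrib]
  ring_nf

theorem sum_qBinom_mul_qDescFactorial (hq : q ≠ -1) (t m : ℕ) :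
    ∑ k ∈ Finset.range (m + 1), (-1) ^ k * qBinom q m k * (q ^ (k * (k - 1) / 2) *
      ((1 - q) ^ k * qDescFactorial q t k)) = q ^ (m * t) := by
  induction m with
  | zero => simp [qBinom_zero_right hq, qDescFactorial]
  | succ m ih =>
    rw [sum_neg_one_pow_mul_qBinom_succ hq, add_mul, one_mul, pow_add, ← ih, Finset.sum_mul]
    refine Finset.sum_congr rfl fun k _ => ?_
    rw [Nat.triangle_succ, one_sub_pow_mul_qDescFactorial_succ]
    linear_combination (-1) ^ k * qBinom q m k * q ^ (k * (k - 1) / 2) * (1 - q) ^ k *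
      pow_mul_pow_sub_mul_qDescFactorial (q := q) t k

section Series

variable (ρ : ℝ) (a : ℕ → ℝ)

lemma qDescFactorial_mul_term_add (hq : q ≠ -1) (k j : ℕ) :
    qDescFactorial q (k + j) k * (ρ ^ (k + j) / qFact q (k + j) * a (k + j)) =
      ρ ^ k * (ρ ^ j / qFact q j * a (k + j)) := by
  have hfact := qDescFactorial_mul_qFact_sub (q := q) (Nat.le_add_right k j)
  rw [Nat.add_sub_cancel_left] at hfact
  have := qFact_ne_zero hq j
  have := qFact_ne_zero hq (k + j)
  field_simp
  linear_combination ρ ^ (k + j) * a (k + j) * hfact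

lemma qDescFactorial_mul_eq_zero_of_notMem_range (k t : ℕ) (ht : t ∉ Set.range (k + ·)) :
    qDescFactorial q t k * (ρ ^ t / qFact q t * a t) = 0 := by
  have : t < k := by
    by_contra! hkt
    exact ht ⟨t - k, Nat.add_sub_cancel' hkt⟩
  rw [qDescFactorial_of_lt this, zero_mul]

lemma summable_qDescFactorial_mul (hq : q ≠ -1) (k : ℕ)
    (h : Summable fun j => ρ ^ j / qFact q j * a (k + j)) :
    Summable fun t => qDescFactorial q t k * (ρ ^ t / qFact q t * a t) :=
  ((add_right_injective k).summable_iff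
    (qDescFactorial_mul_eq_zero_of_notMem_range ρ a k)).1 <|
      (h.mul_left (ρ ^ k)).congr fun j => (qDescFactorial_mul_term_add ρ a hq k j).symm

lemma tsum_qDescFactorial_mul (hq : q ≠ -1) (k : ℕ) :
    ∑' t, qDescFactorial q t k * (ρ ^ t / qFact q t * a t) =
      ρ ^ k * ∑' j, ρ ^ j / qFact q j * a (k + j) := by
  rw [← tsum_mul_left, ← (add_right_injective k).tsum_eq (Function.support_subset_iff'.2
    (qDescFactorial_mul_eq_zero_of_notMem_range ρ a k))]
  exact tsum_congr (qDescFactorial_mul_term_add ρ a hq k)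

end Series

theorem statement1_general (q ρ : ℝ) (hq1 : -1 < q) (ξ : ℕ → ℝ)
    (hconv : ∀ n : ℕ, ∀ ρ' : ℝ, |ρ'| ≤ |ρ| →
      Summable (fun j : ℕ => |ρ' ^ j / qFact q j * ξ (n + j)|))
    (m n : ℕ) :
    (∑' j : ℕ, (ρ * q ^ m) ^ j / qFact q j * ξ (n + j)) =
      ∑ k ∈ Finset.range (m + 1),
        (-1 : ℝ) ^ k * qBinom q m k * q ^ (k * (k - 1) / 2) * (1 - q) ^ k * ρ ^ k *
          (∑' j : ℕ, ρ ^ j / qFact q j * ξ (n + k + j)) := by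
  have hq : q ≠ -1 := hq1.ne'
  set c : ℕ → ℝ := fun k => (-1) ^ k * qBinom q m k * q ^ (k * (k - 1) / 2) * (1 - q) ^ k
  set g : ℕ → ℝ := fun t => ρ ^ t / qFact q t * ξ (n + t)
  have hsummable (k : ℕ) : Summable fun t => c k * (qDescFactorial q t k * g t) :=
    (summable_qDescFactorial_mul ρ _ hq k (by
      simpa only [add_assoc] using (hconv (n + k) ρ le_rfl).of_abs)).mul_left (c k)
  calc ∑' t, (ρ * q ^ m) ^ t / qFact q t * ξ (n + t)
      = ∑' t, ∑ k ∈ Finset.range (m + 1), c k * (qDescFactorial q t k * g t) := by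
        refine tsum_congr fun t => ?_
        calc (ρ * q ^ m) ^ t / qFact q t * ξ (n + t) = q ^ (m * t) * g t := by
              rw [mul_pow, ← pow_mul]
              ring
          _ = _ := by
              rw [← sum_qBinom_mul_qDescFactorial hq t m, Finset.sum_mul]
              exact Finset.sum_congr rfl fun k _ => by ring
    _ = ∑ k ∈ Finset.range (m + 1), c k * ∑' t, qDescFactorial q t k * g t := by
        rw [Summable.tsum_finsetSum fun k _ => hsummable k]
        simp only [tsum_mul_left]
    _ = _ := Finset.sum_congr rfl fun k _ => by
        rw [tsum_qDescFactorial_mul ρ _ hq]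
        simp only [c, add_assoc]
        ring

/-- Proposition `pomoc`: for -1 < q ≤ 1, |ρ| < 1 and a sequence ξ with
σ_n(ρ'|q) = Σ_{j≥0} ρ'^j/[j]_q! · ξ_{n+j} absolutely convergent for all |ρ'| ≤ |ρ|,
σ_n(ρ q^m|q) = Σ_{k=0}^m (-1)^k [m choose k]_q q^{k(k-1)/2} (1-q)^k ρ^k σ_{n+k}(ρ|q). -/
theorem statement1 (q ρ : ℝ) (hq1 : -1 < q) (hq2 : q ≤ 1) (hρ : |ρ| < 1) (ξ : ℕ → ℝ)
    (hconv : ∀ n : ℕ, ∀ ρ' : ℝ, |ρ'| ≤ |ρ| →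
      Summable (fun j : ℕ => |ρ' ^ j / qFact q j * ξ (n + j)|))
    (m n : ℕ) :
    (∑' j : ℕ, (ρ * q ^ m) ^ j / qFact q j * ξ (n + j)) =
      ∑ k ∈ Finset.range (m + 1),
        (-1 : ℝ) ^ k * qBinom q m k * q ^ (k * (k - 1) / 2) * (1 - q) ^ k * ρ ^ k *
          (∑' j : ℕ, ρ ^ j / qFact q j * ξ (n + k + j)) :=
  statement1_general q ρ hq1 ξ hconv m n
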